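/- arXiv:1804.09354 — 2 statements merged into one kernel-verified Lean document; each statement's English description precedes it below -/
import Mathlib

section
/- Let DMU_o = (x_o,y_o), o ∈ J, be FDH_V-efficient. Then Right-CRS prevails at DMU_o if and only if both of the following hold: (a) for every j ∈ J, α_{jo} ≥ β_{jo} or β_{jo} ≤ 1; and (b) there exists j ∈ J with β_{jo} > 1 and β_{jo} ≥ α_{jo}. -/
open Set

noncomputable section

/-- The FDH variable-returns-to-scale technology:
`T = {(x,y) : y ≥ 0 and ∃ j, x_j ≤ x and y ≤ y_j}`. -/
def FDH {n m s : ℕ} (x : Fin n → Fin m → ℝ) (y : Fin n → Fin s → ℝ) :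
    Set ((Fin m → ℝ) × (Fin s → ℝ)) :=
  {p | (∀ r, 0 ≤ p.2 r) ∧ ∃ j : Fin n, (∀ i, x j i ≤ p.1 i) ∧ (∀ r, p.2 r ≤ y j r)}

/-- DMU_o is FDH_V-efficient: no (x,y) ∈ T with x ≤ x_o, y ≥ y_o, (x,y) ≠ (x_o,y_o). -/
def FDHEfficient {n m s : ℕ} (x : Fin n → Fin m → ℝ) (y : Fin n → Fin s → ℝ)
    (o : Fin n) : Prop :=
  ¬ ∃ p ∈ FDH x y, (∀ i, p.1 i ≤ x o i) ∧ (∀ r, y o r ≤ p.2 r) ∧ p ≠ (x o, y o)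

/-- `α_{jo} = max_i x_{ij} / x_{io}`. -/
def alphaRatio {n m s : ℕ} (x : Fin n → Fin m → ℝ) (_y : Fin n → Fin s → ℝ)
    (o j : Fin n) : ℝ :=
  ⨆ i : Fin m, x j i / x o i

/-- `β_{jo} = min_r y_{rj} / y_{ro}`. -/
def betaRatio {n m s : ℕ} (_x : Fin n → Fin m → ℝ) (y : Fin n → Fin s → ℝ)
    (o j : Fin n) : ℝ :=
  ⨅ r : Fin s, y j r / y o r

/-- `θ_o(D) = inf {θ : ∃ j ∈ J, δ ∈ D, δ x_j ≤ θ x_o, δ y_j ≥ y_o}`. -/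
def thetaEff {n m s : ℕ} (x : Fin n → Fin m → ℝ) (y : Fin n → Fin s → ℝ)
    (o : Fin n) (D : Set ℝ) : ℝ :=
  sInf {θ : ℝ | ∃ j : Fin n, ∃ δ ∈ D,
    (∀ i, δ * x j i ≤ θ * x o i) ∧ (∀ r, y o r ≤ δ * y j r)}

/-- G-IRS prevails at DMU_o iff `θ_o^{ND} > θ_o^{C} = θ_o^{NI}`. -/
def GIRS {n m s : ℕ} (x : Fin n → Fin m → ℝ) (y : Fin n → Fin s → ℝ)
    (o : Fin n) : Prop :=
  thetaEff x y o (Ici 1) > thetaEff x y o (Ici 0) ∧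
    thetaEff x y o (Ici 0) = thetaEff x y o (Icc 0 1)

/-- G-DRS prevails at DMU_o iff `θ_o^{NI} > θ_o^{C} = θ_o^{ND}`. -/
def GDRS {n m s : ℕ} (x : Fin n → Fin m → ℝ) (y : Fin n → Fin s → ℝ)
    (o : Fin n) : Prop :=
  thetaEff x y o (Icc 0 1) > thetaEff x y o (Ici 0) ∧
    thetaEff x y o (Ici 0) = thetaEff x y o (Ici 1)

/-- G-CRS prevails at DMU_o iff `θ_o^{C} = θ_o^{NI} = θ_o^{ND} = 1`. -/
def GCRS {n m s : ℕ} (x : Fin n → Fin m → ℝ) (y : Fin n → Fin s → ℝ)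
    (o : Fin n) : Prop :=
  thetaEff x y o (Ici 0) = 1 ∧ thetaEff x y o (Icc 0 1) = 1 ∧
    thetaEff x y o (Ici 1) = 1

/-- G-SCRS prevails at DMU_o iff `θ_o^{C} = θ_o^{NI} = θ_o^{ND} < 1`. -/
def GSCRS {n m s : ℕ} (x : Fin n → Fin m → ℝ) (y : Fin n → Fin s → ℝ)
    (o : Fin n) : Prop :=
  thetaEff x y o (Ici 0) = thetaEff x y o (Icc 0 1) ∧
    thetaEff x y o (Icc 0 1) = thetaEff x y o (Ici 1) ∧
    thetaEff x y o (Ici 1) < 1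

/-- Response function `β_o(α) = sup {β : (α x_o, β y_o) ∈ T}`. -/
def respFun {n m s : ℕ} (x : Fin n → Fin m → ℝ) (y : Fin n → Fin s → ℝ)
    (o : Fin n) (α : ℝ) : ℝ :=
  sSup {β : ℝ | ((fun i => α * x o i), (fun r => β * y o r)) ∈ FDH x y}

/-- Maximum incremental ratio `σ_o^+ = sup_{α > 1} (β_o(α) - 1)/(α - 1)`. -/
def sigmaPlus {n m s : ℕ} (x : Fin n → Fin m → ℝ) (y : Fin n → Fin s → ℝ)
    (o : Fin n) : ℝ :=
  sSup {ρ : ℝ | ∃ α : ℝ, 1 < α ∧ ρ = (respFun x y o α - 1) / (α - 1)}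

/-- Minimum decremental ratio `σ_o^- = inf {(β_o(α)-1)/(α-1) : α < 1 feasible}`,
taken in the extended reals (so it is `+∞` when no `α < 1` is feasible). -/
def sigmaMinus {n m s : ℕ} (x : Fin n → Fin m → ℝ) (y : Fin n → Fin s → ℝ)
    (o : Fin n) : EReal :=
  sInf {ρ : EReal | ∃ α : ℝ, α < 1 ∧
    (∃ β : ℝ, ((fun i => α * x o i), (fun r => β * y o r)) ∈ FDH x y) ∧
    ρ = (((respFun x y o α - 1) / (α - 1) : ℝ) : EReal)}

/-- Right-IRS: `(δ x_o, δ y_o) ∈ int T` for some `δ > 1`. -/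
def RightIRS {n m s : ℕ} (x : Fin n → Fin m → ℝ) (y : Fin n → Fin s → ℝ)
    (o : Fin n) : Prop :=
  ∃ δ : ℝ, 1 < δ ∧
    ((fun i => δ * x o i), (fun r => δ * y o r)) ∈ interior (FDH x y)

/-- Right-DRS: `(δ x_o, δ y_o) ∉ T` for every `δ > 1`. -/
def RightDRS {n m s : ℕ} (x : Fin n → Fin m → ℝ) (y : Fin n → Fin s → ℝ)
    (o : Fin n) : Prop :=
  ∀ δ : ℝ, 1 < δ →
    ((fun i => δ * x o i), (fun r => δ * y o r)) ∉ FDH x y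

/-- Right-CRS: neither Right-IRS nor Right-DRS. -/
def RightCRS {n m s : ℕ} (x : Fin n → Fin m → ℝ) (y : Fin n → Fin s → ℝ)
    (o : Fin n) : Prop :=
  ¬ RightIRS x y o ∧ ¬ RightDRS x y o

/-- Left-IRS: `(δ x_o, δ y_o) ∉ T` for every `δ ∈ (0,1)`. -/
def LeftIRS {n m s : ℕ} (x : Fin n → Fin m → ℝ) (y : Fin n → Fin s → ℝ)
    (o : Fin n) : Prop :=
  ∀ δ : ℝ, 0 < δ → δ < 1 →
    ((fun i => δ * x o i), (fun r => δ * y o r)) ∉ FDH x y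

/-- Left-DRS: `(δ x_o, δ y_o) ∈ int T` for some `δ ∈ (0,1)`. -/
def LeftDRS {n m s : ℕ} (x : Fin n → Fin m → ℝ) (y : Fin n → Fin s → ℝ)
    (o : Fin n) : Prop :=
  ∃ δ : ℝ, 0 < δ ∧ δ < 1 ∧
    ((fun i => δ * x o i), (fun r => δ * y o r)) ∈ interior (FDH x y)

/-- Left-CRS: neither Left-IRS nor Left-DRS. -/
def LeftCRS {n m s : ℕ} (x : Fin n → Fin m → ℝ) (y : Fin n → Fin s → ℝ)
    (o : Fin n) : Prop :=
  ¬ LeftIRS x y o ∧ ¬ LeftDRS x y o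

/-! Since `x_o` and `y_o` are positive, the ray point `(δ x_o, δ y_o)` with `δ > 0` lies in `T`
exactly when some `j` has `α_{jo} ≤ δ ≤ β_{jo}`, and in the interior of `T` exactly when some `j`
has `α_{jo} < δ < β_{jo}`. Hence Right-IRS means `max α_{jo} 1 < β_{jo}` for some `j`, and the
failure of Right-DRS means `1 < β_{jo}` and `α_{jo} ≤ β_{jo}` for some `j` (take `δ = β_{jo}`). -/

section FiniteExtrema

variable {ι α : Type*} [Finite ι]

/- A real `⨆` over an empty index is `0`, hence the sign conditions on `a`. -/
theorem Real.iSup_le_iff_of_finite {f : ι → ℝ} {a : ℝ} (ha : 0 ≤ a) :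
    ⨆ i, f i ≤ a ↔ ∀ i, f i ≤ a :=
  ⟨fun h i => (le_ciSup (Set.finite_range f).bddAbove i).trans h, fun h => Real.iSup_le h ha⟩

theorem Real.iSup_lt_iff_of_finite {f : ι → ℝ} {a : ℝ} (ha : 0 < a) :
    ⨆ i, f i < a ↔ ∀ i, f i < a := by
  refine ⟨fun h i => (le_ciSup (Set.finite_range f).bddAbove i).trans_lt h, fun h => ?_⟩
  cases isEmpty_or_nonempty ι
  · rwa [Real.iSup_of_isEmpty]
  · obtain ⟨i, hi⟩ := exists_eq_ciSup_of_finite (f := f)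
    exact hi ▸ h i

theorem lt_ciInf_iff_of_finite [Nonempty ι] [ConditionallyCompleteLinearOrder α] {f : ι → α}
    {a : α} : a < ⨅ i, f i ↔ ∀ i, a < f i := by
  refine ⟨fun h i => h.trans_le (ciInf_le (Set.finite_range f).bddBelow i), fun h => ?_⟩
  obtain ⟨i, hi⟩ := exists_eq_ciInf_of_finite (f := f)
  exact hi ▸ h i

end FiniteExtrema

theorem exists_pos_add_smul_mem_of_mem_interior {E : Type*} [AddCommGroup E] [Module ℝ E]
    [TopologicalSpace E] [ContinuousAdd E] [ContinuousSMul ℝ E] {S : Set E} {p : E}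
    (hp : p ∈ interior S) (v : E) : ∃ t : ℝ, 0 < t ∧ p + t • v ∈ S := by
  have hlim : Filter.Tendsto (fun t : ℝ => p + t • v) (nhdsWithin 0 (Ioi 0)) (nhds p) := by
    have hcont : Continuous fun t : ℝ => p + t • v := by fun_prop
    simpa using (hcont.tendsto 0).mono_left nhdsWithin_le_nhds
  obtain ⟨t, hS, ht⟩ :=
    ((hlim.eventually (mem_interior_iff_mem_nhds.1 hp)).and self_mem_nhdsWithin).exists
  exact ⟨t, ht, hS⟩

section RayPoints

variable {n m s : ℕ} {x : Fin n → Fin m → ℝ} {y : Fin n → Fin s → ℝ} {o j : Fin n} {δ : ℝ}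

theorem alphaRatio_le_iff (hxo : ∀ i, 0 < x o i) (hδ : 0 ≤ δ) :
    alphaRatio x y o j ≤ δ ↔ ∀ i, x j i ≤ δ * x o i := by
  rw [alphaRatio, Real.iSup_le_iff_of_finite hδ]
  exact forall_congr' fun i => by rw [div_le_iff₀ (hxo i)]

theorem alphaRatio_lt_iff (hxo : ∀ i, 0 < x o i) (hδ : 0 < δ) :
    alphaRatio x y o j < δ ↔ ∀ i, x j i < δ * x o i := by
  rw [alphaRatio, Real.iSup_lt_iff_of_finite hδ]
  exact forall_congr' fun i => by rw [div_lt_iff₀ (hxo i)]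

variable [Nonempty (Fin s)]

theorem le_betaRatio_iff (hyo : ∀ r, 0 < y o r) :
    δ ≤ betaRatio x y o j ↔ ∀ r, δ * y o r ≤ y j r := by
  rw [betaRatio, le_ciInf_iff (Set.finite_range _).bddBelow]
  exact forall_congr' fun r => by rw [le_div_iff₀ (hyo r)]

theorem lt_betaRatio_iff (hyo : ∀ r, 0 < y o r) :
    δ < betaRatio x y o j ↔ ∀ r, δ * y o r < y j r := by
  rw [betaRatio, lt_ciInf_iff_of_finite]
  exact forall_congr' fun r => by rw [lt_div_iff₀ (hyo r)]

theorem ray_mem_FDH_iff (hxo : ∀ i, 0 < x o i) (hyo : ∀ r, 0 < y o r) (hδ : 0 < δ) :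
    ((fun i => δ * x o i), (fun r => δ * y o r)) ∈ FDH x y ↔
      ∃ j, alphaRatio x y o j ≤ δ ∧ δ ≤ betaRatio x y o j := by
  simp only [FDH, mem_ofPred_eq, alphaRatio_le_iff hxo hδ.le, le_betaRatio_iff hyo]
  exact and_iff_right fun r => (mul_pos hδ (hyo r)).le

theorem ray_mem_interior_FDH_iff (hxo : ∀ i, 0 < x o i) (hyo : ∀ r, 0 < y o r) (hδ : 0 < δ) :
    ((fun i => δ * x o i), (fun r => δ * y o r)) ∈ interior (FDH x y) ↔
      ∃ j, alphaRatio x y o j < δ ∧ δ < betaRatio x y o j := by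
  simp only [alphaRatio_lt_iff hxo hδ, lt_betaRatio_iff hyo]
  constructor
  · intro hp
    obtain ⟨t, ht, -, j, hxj, hyj⟩ :=
      exists_pos_add_smul_mem_of_mem_interior hp ((fun _ => -1), (fun _ => 1))
    refine ⟨j, fun i => ?_, fun r => ?_⟩
    · have := hxj i
      simp only [Prod.fst_add, Prod.smul_fst, Pi.add_apply, Pi.smul_apply, smul_eq_mul] at this
      linarith
    · have := hyj r
      simp only [Prod.snd_add, Prod.smul_snd, Pi.add_apply, Pi.smul_apply, smul_eq_mul] at this
      linarith
  · rintro ⟨j, hxj, hyj⟩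
    let box := (univ.pi fun i => Ioi (x j i)) ×ˢ (univ.pi fun r => Ioo 0 (y j r))
    have hbox : box ⊆ FDH x y := fun p hp => by
      simp only [box, mem_prod, mem_univ_pi, mem_Ioi, mem_Ioo] at hp
      exact ⟨fun r => (hp.2 r).1.le, j, fun i => (hp.1 i).le, fun r => (hp.2 r).2.le⟩
    have hopen : IsOpen box :=
      (isOpen_set_pi finite_univ fun _ _ => isOpen_Ioi).prod
        (isOpen_set_pi finite_univ fun _ _ => isOpen_Ioo)
    refine interior_maximal hbox hopen ?_
    simp only [box, mem_prod, mem_univ_pi, mem_Ioi, mem_Ioo]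
    exact ⟨hxj, fun r => ⟨mul_pos hδ (hyo r), hyj r⟩⟩

theorem rightIRS_iff (hxo : ∀ i, 0 < x o i) (hyo : ∀ r, 0 < y o r) :
    RightIRS x y o ↔ ∃ j, alphaRatio x y o j < betaRatio x y o j ∧ 1 < betaRatio x y o j := by
  constructor
  · rintro ⟨δ, hδ, hp⟩
    obtain ⟨j, hα, hβ⟩ := (ray_mem_interior_FDH_iff hxo hyo (one_pos.trans hδ)).1 hp
    exact ⟨j, hα.trans hβ, hδ.trans hβ⟩
  · rintro ⟨j, hαβ, hβ⟩
    obtain ⟨δ, hδ, hδβ⟩ := exists_between (max_lt hαβ hβ)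
    have hδ1 : 1 < δ := (le_max_right _ _).trans_lt hδ
    exact ⟨δ, hδ1, (ray_mem_interior_FDH_iff hxo hyo (one_pos.trans hδ1)).2
      ⟨j, (le_max_left _ _).trans_lt hδ, hδβ⟩⟩

theorem not_rightDRS_iff (hxo : ∀ i, 0 < x o i) (hyo : ∀ r, 0 < y o r) :
    ¬ RightDRS x y o ↔
      ∃ j, 1 < betaRatio x y o j ∧ alphaRatio x y o j ≤ betaRatio x y o j := by
  simp only [RightDRS, not_forall, not_not, exists_prop]
  constructor
  · rintro ⟨δ, hδ, hp⟩
    obtain ⟨j, hα, hβ⟩ := (ray_mem_FDH_iff hxo hyo (one_pos.trans hδ)).1 hp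
    exact ⟨j, hδ.trans_le hβ, hα.trans hβ⟩
  · rintro ⟨j, hβ, hαβ⟩
    exact ⟨_, hβ, (ray_mem_FDH_iff hxo hyo (one_pos.trans hβ)).2 ⟨j, hαβ, le_rfl⟩⟩

end RayPoints

theorem stmt6_general {n m s : ℕ} (hs : 0 < s)
    (x : Fin n → Fin m → ℝ) (y : Fin n → Fin s → ℝ)
    (hx : ∀ j i, 0 < x j i) (hy : ∀ j r, 0 < y j r)
    (o : Fin n) :
    RightCRS x y o ↔
      (∀ j : Fin n, betaRatio x y o j ≤ alphaRatio x y o j ∨ betaRatio x y o j ≤ 1) ∧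
      (∃ j : Fin n, 1 < betaRatio x y o j ∧ alphaRatio x y o j ≤ betaRatio x y o j) := by
  have : Nonempty (Fin s) := Fin.pos_iff_nonempty.1 hs
  rw [RightCRS, rightIRS_iff (hx o) (hy o), not_rightDRS_iff (hx o) (hy o)]
  simp only [not_exists, not_and_or, not_lt]

/-- Right-CRS prevails at the FDH_V-efficient DMU_o iff
(a) for every `j`, `α_{jo} ≥ β_{jo}` or `β_{jo} ≤ 1`, and
(b) there exists `j` with `β_{jo} > 1` and `β_{jo} ≥ α_{jo}`. -/
theorem stmt6 {n m s : ℕ} (hm : 0 < m) (hs : 0 < s)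
    (x : Fin n → Fin m → ℝ) (y : Fin n → Fin s → ℝ)
    (hx : ∀ j i, 0 < x j i) (hy : ∀ j r, 0 < y j r)
    (o : Fin n) (heff : FDHEfficient x y o) :
    RightCRS x y o ↔
      (∀ j : Fin n, betaRatio x y o j ≤ alphaRatio x y o j ∨ betaRatio x y o j ≤ 1) ∧
      (∃ j : Fin n, 1 < betaRatio x y o j ∧ alphaRatio x y o j ≤ betaRatio x y o j) :=
  stmt6_general hs x y hx hy o
end
end

section
/- Let DMU_o = (x_o,y_o), o ∈ J, be FDH_V-efficient. Then Left-IRS prevails at DMU_o if and only if σ_o^- > 1. -/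
/-
Write `a_j = max_i x_{ij}/x_{io}` and `b_j = min_r y_{rj}/y_{ro}`, so that `(α x_o, β y_o) ∈ T` iff
`0 ≤ β` and `a_j ≤ α`, `β ≤ b_j` for some `j`, and `β_o(α)` is the largest `b_j` with `a_j ≤ α`.
Left-IRS says exactly that `b_j < a_j` whenever `a_j < 1`. Then every decremental ratio
`(1 - β_o(α))/(1 - α)` is at least one of the finitely many numbers `(1 - b_j)/(1 - a_j) > 1`,
so `σ_o^- > 1`. Conversely, if `(δ x_o, δ y_o) ∈ T` with `δ < 1`, then `β_o(δ) ≥ δ` and the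
ratio at `α = δ` is at most `1`.
-/

open Set

noncomputable section

section ScaledFDH

variable {n m s : ℕ} (x : Fin n → Fin m → ℝ) (y : Fin n → Fin s → ℝ) (o : Fin n)

def outputScalings (α : ℝ) : Set ℝ :=
  {β | ((fun i => α * x o i), (fun r => β * y o r)) ∈ FDH x y}

lemma forall_le_mul_iff_alphaRatio_le [Nonempty (Fin m)] (hxo : ∀ i, 0 < x o i)
    (j : Fin n) (α : ℝ) : (∀ i, x j i ≤ α * x o i) ↔ alphaRatio x y o j ≤ α := by
  simp only [alphaRatio, ciSup_le_iff (finite_range _).bddAbove, div_le_iff₀ (hxo _)]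

lemma forall_mul_le_iff_le_betaRatio [Nonempty (Fin s)] (hyo : ∀ r, 0 < y o r)
    (j : Fin n) (β : ℝ) : (∀ r, β * y o r ≤ y j r) ↔ β ≤ betaRatio x y o j := by
  simp only [betaRatio, le_ciInf_iff (finite_range _).bddBelow, le_div_iff₀ (hyo _)]

lemma alphaRatio_pos [Nonempty (Fin m)] (hx : ∀ j i, 0 < x j i) (j : Fin n) :
    0 < alphaRatio x y o j := by
  obtain ⟨i⟩ := ‹Nonempty (Fin m)›
  exact (div_pos (hx j i) (hx o i)).trans_le
    (le_ciSup (finite_range fun i => x j i / x o i).bddAbove i)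

lemma betaRatio_nonneg [Nonempty (Fin s)] (hy : ∀ j r, 0 < y j r) (j : Fin n) :
    0 ≤ betaRatio x y o j :=
  le_ciInf fun r => (div_pos (hy j r) (hy o r)).le

variable [Nonempty (Fin m)] [Nonempty (Fin s)] {x y o}

lemma mem_outputScalings_iff (hxo : ∀ i, 0 < x o i) (hyo : ∀ r, 0 < y o r) {α β : ℝ} :
    β ∈ outputScalings x y o α ↔
      0 ≤ β ∧ ∃ j, alphaRatio x y o j ≤ α ∧ β ≤ betaRatio x y o j := by
  have hβ : (∀ r, 0 ≤ β * y o r) ↔ 0 ≤ β :=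
    ⟨fun h => nonneg_of_mul_nonneg_left (h (Classical.arbitrary _)) (hyo _),
      fun h r => mul_nonneg h (hyo r).le⟩
  simp only [outputScalings, FDH, mem_ofPred_eq, hβ,
    forall_le_mul_iff_alphaRatio_le x y o hxo, forall_mul_le_iff_le_betaRatio x y o hyo]

lemma exists_isGreatest_outputScalings (hxo : ∀ i, 0 < x o i) (hy : ∀ j r, 0 < y j r)
    {α : ℝ} {j : Fin n} (hj : alphaRatio x y o j ≤ α) :
    ∃ k, alphaRatio x y o k ≤ α ∧ IsGreatest (outputScalings x y o α) (betaRatio x y o k) := by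
  classical
  obtain ⟨k, hk, hmax⟩ := (Finset.univ.filter fun j => alphaRatio x y o j ≤ α).exists_max_image
    (betaRatio x y o) ⟨j, by simpa using hj⟩
  have hk : alphaRatio x y o k ≤ α := by simpa using hk
  refine ⟨k, hk, (mem_outputScalings_iff hxo (hy o)).2 ⟨betaRatio_nonneg x y o hy k, k, hk, le_rfl⟩,
    fun β hβ => ?_⟩
  obtain ⟨-, j', hj', hβj'⟩ := (mem_outputScalings_iff hxo (hy o)).1 hβ
  exact hβj'.trans (hmax j' (by simpa using hj'))

lemma exists_respFun_eq_betaRatio (hxo : ∀ i, 0 < x o i) (hy : ∀ j r, 0 < y j r)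
    {α : ℝ} {j : Fin n} (hj : alphaRatio x y o j ≤ α) :
    ∃ k, alphaRatio x y o k ≤ α ∧ respFun x y o α = betaRatio x y o k := by
  obtain ⟨k, hk, hgreatest⟩ := exists_isGreatest_outputScalings hxo hy hj
  exact ⟨k, hk, hgreatest.csSup_eq⟩

lemma le_respFun (hxo : ∀ i, 0 < x o i) (hy : ∀ j r, 0 < y j r) {α β : ℝ}
    (hβ : β ∈ outputScalings x y o α) : β ≤ respFun x y o α := by
  obtain ⟨-, j, hj, -⟩ := (mem_outputScalings_iff hxo (hy o)).1 hβ
  obtain ⟨_, -, hgreatest⟩ := exists_isGreatest_outputScalings hxo hy hj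
  exact le_csSup hgreatest.bddAbove hβ

end ScaledFDH

lemma div_one_sub_le_div_sub_one {a b α : ℝ} (hb : b < a) (ha : a ≤ α) (hα : α < 1) :
    (1 - b) / (1 - a) ≤ (b - 1) / (α - 1) := by
  rw [← neg_sub 1 b, ← neg_sub 1 α, neg_div_neg_eq]
  exact div_le_div_of_nonneg_left (by linarith) (by linarith) (by linarith)

section LeftReturnsToScale

variable {n m s : ℕ} [Nonempty (Fin m)] [Nonempty (Fin s)]
  {x : Fin n → Fin m → ℝ} {y : Fin n → Fin s → ℝ} {o : Fin n}

lemma betaRatio_lt_alphaRatio_of_leftIRS (hx : ∀ j i, 0 < x j i) (hyo : ∀ r, 0 < y o r)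
    (h : LeftIRS x y o) {j : Fin n} (hj : alphaRatio x y o j < 1) :
    betaRatio x y o j < alphaRatio x y o j := by
  by_contra! hle
  have ha := alphaRatio_pos x y o hx j
  have hpos : 0 < min (betaRatio x y o j) ((alphaRatio x y o j + 1) / 2) :=
    lt_min (ha.trans_le hle) (by linarith)
  refine h _ hpos ((min_le_right _ _).trans_lt (by linarith))
    ((mem_outputScalings_iff (hx o) hyo).2 ⟨hpos.le, j, le_min hle (by linarith), min_le_left _ _⟩)

lemma one_lt_sigmaMinus_of_leftIRS (hx : ∀ j i, 0 < x j i) (hy : ∀ j r, 0 < y j r)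
    (h : LeftIRS x y o) : 1 < sigmaMinus x y o := by
  classical
  let c : Fin n → EReal := fun j =>
    (((1 - betaRatio x y o j) / (1 - alphaRatio x y o j) : ℝ) : EReal)
  set G := Finset.univ.filter fun j => alphaRatio x y o j < 1
  have hc : 1 < G.inf c := by
    refine (Finset.lt_inf_iff (EReal.coe_lt_top 1)).2 fun j hj => ?_
    have haj : alphaRatio x y o j < 1 := by simpa [G] using hj
    have hbj := betaRatio_lt_alphaRatio_of_leftIRS hx (hy o) h haj
    exact EReal.coe_lt_coe_iff.2 ((one_lt_div (by linarith)).2 (by linarith))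
  refine hc.trans_le (le_sInf ?_)
  rintro _ ⟨α, hα, ⟨β, hβ⟩, rfl⟩
  obtain ⟨-, j, hj, -⟩ := (mem_outputScalings_iff (hx o) (hy o)).1 hβ
  obtain ⟨k, hk, hresp⟩ := exists_respFun_eq_betaRatio (hx o) hy hj
  have hk1 : alphaRatio x y o k < 1 := hk.trans_lt hα
  refine (Finset.inf_le (by simpa [G] using hk1)).trans (EReal.coe_le_coe_iff.2 ?_)
  rw [hresp]
  exact div_one_sub_le_div_sub_one (betaRatio_lt_alphaRatio_of_leftIRS hx (hy o) h hk1) hk hα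

lemma sigmaMinus_le_one_of_mem_outputScalings (hxo : ∀ i, 0 < x o i) (hy : ∀ j r, 0 < y j r)
    {δ : ℝ} (hδ : δ < 1) (hmem : δ ∈ outputScalings x y o δ) : sigmaMinus x y o ≤ 1 := by
  have hratio : (respFun x y o δ - 1) / (δ - 1) ≤ 1 := by
    rw [div_le_one_of_neg (by linarith)]
    linarith [le_respFun hxo hy hmem]
  have hle : sigmaMinus x y o ≤ (((respFun x y o δ - 1) / (δ - 1) : ℝ) : EReal) :=
    sInf_le ⟨δ, hδ, ⟨δ, hmem⟩, rfl⟩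
  exact hle.trans (by exact_mod_cast hratio)

end LeftReturnsToScale

theorem stmt13_general {n m s : ℕ} (hm : 0 < m) (hs : 0 < s)
    (x : Fin n → Fin m → ℝ) (y : Fin n → Fin s → ℝ)
    (hx : ∀ j i, 0 < x j i) (hy : ∀ j r, 0 < y j r)
    (o : Fin n) :
    LeftIRS x y o ↔ (1 : EReal) < sigmaMinus x y o := by
  have : Nonempty (Fin m) := Fin.pos_iff_nonempty.1 hm
  have : Nonempty (Fin s) := Fin.pos_iff_nonempty.1 hs
  refine ⟨one_lt_sigmaMinus_of_leftIRS hx hy, fun hσ δ _ hδ hmem => ?_⟩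
  exact hσ.not_ge (sigmaMinus_le_one_of_mem_outputScalings (hx o) hy hδ hmem)

/-- Left-IRS at the FDH_V-efficient DMU_o iff `σ_o^- > 1`. -/
theorem stmt13 {n m s : ℕ} (hm : 0 < m) (hs : 0 < s)
    (x : Fin n → Fin m → ℝ) (y : Fin n → Fin s → ℝ)
    (hx : ∀ j i, 0 < x j i) (hy : ∀ j r, 0 < y j r)
    (o : Fin n) (heff : FDHEfficient x y o) :
    LeftIRS x y o ↔ (1 : EReal) < sigmaMinus x y o :=
  stmt13_general hm hs x y hx hy o
end
end
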